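/- arXiv:2211.11053 — 2 statements merged into one kernel-verified Lean document; each statement's English description precedes it below -/
import Mathlib

section
/- If a signal u ∈ L²[0,∞) has Laguerre spectrum {u_j} and y(t) = u(t - τ) (extended by zero for t < τ) for a delay τ ≥ 0, then the Laguerre spectrum of y satisfies y_j = Σ_{k=0}^{j} h_{j-k}(κ) u_k for all j, where h_k(κ) = e^{-κ/2} L_k(κ), κ = 2pτ, and L_k is the associated Laguerre polynomial with parameter α = -1. -/
open MeasureTheory

/-- Associated Laguerre polynomial with parameter `α = -1`. -/
noncomputable def assocLaguerre (m : ℕ) (ξ : ℝ) : ℝ :=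
  ∑ n ∈ Finset.range (m + 1),
    (1 / (n.factorial : ℝ)) * ((m - 1).choose (m - n) : ℝ) * (-ξ) ^ n

/-- The `k`-th continuous-time Laguerre function `ℓ_k(t) = √(2p) e^{-pt} L_k^{(0)}(2pt)`. -/
noncomputable def laguerreFun (p : ℝ) (k : ℕ) (t : ℝ) : ℝ :=
  Real.sqrt (2 * p) * Real.exp (-p * t) *
    ∑ n ∈ Finset.range (k + 1), (k.choose n : ℝ) * (-(2 * p * t)) ^ n / (n.factorial : ℝ)

/-- The continuous Laguerre spectrum of a signal on `[0,∞)`. -/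
noncomputable def laguerreSpec (p : ℝ) (f : ℝ → ℝ) (j : ℕ) : ℝ :=
  ∫ t in Set.Ioi (0 : ℝ), f t * laguerreFun p j t

/-- Laguerre-domain Markov parameters of the delay operator: `h_k(κ) = e^{-κ/2} L_k(κ)`. -/
noncomputable def markovH (κ : ℝ) (k : ℕ) : ℝ :=
  Real.exp (-κ / 2) * assocLaguerre k κ

/-!
By the Laguerre addition formula `L_j(x + y) = ∑_{k ≤ j} L_{j-k}^{(-1)}(y) L_k(x)` (the case
`α = 0`, `β = -1` of `L_n^{(α+β+1)}(x + y) = ∑_k L_k^{(α)}(x) L_{n-k}^{(β)}(y)`) and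
`e^{-p(s+τ)} = e^{-ps} e^{-pτ}`, the Laguerre functions satisfy the shift identity
`ℓ_j(s + τ) = ∑_{k ≤ j} h_{j-k}(2pτ) ℓ_k(s)`. Substituting `t = s + τ` in the integral
defining `y_j` and integrating term by term, which is legitimate because `u` and every `ℓ_k`
are square integrable, gives the claim. Comparing coefficients of `x^a y^b`, the addition
formula is the upper Vandermonde identity `∑_k C(k, a) C(m - k, b) = C(m + 1, a + b + 1)`.
-/

open Finset

namespace Nat

theorem sum_range_choose_mul_choose (a : ℕ) : ∀ m c : ℕ,
    ∑ k ∈ range (m + 1), k.choose a * (m - k).choose c = (m + 1).choose (a + c + 1)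
  | m, 0 => by
    simp only [choose_zero_right, mul_one, add_zero, ← sum_Icc_choose]
    refine (sum_subset (fun k hk => ?_) fun k hk hk' => choose_eq_zero_of_lt ?_).symm
    · simp only [mem_Icc, mem_range] at hk ⊢; omega
    · simp only [mem_Icc, mem_range, not_and, not_le] at hk hk'; omega
  | 0, c + 1 => by simp [choose_eq_zero_of_lt]
  | m + 1, c + 1 => by
    have hpascal : ∀ k ∈ range (m + 1), k.choose a * (m + 1 - k).choose (c + 1)
        = k.choose a * (m - k).choose c + k.choose a * (m - k).choose (c + 1) := by
      intro k hk
      rw [show m + 1 - k = m - k + 1 by simp at hk; omega, choose_succ_succ, Nat.mul_add]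
    rw [sum_range_succ, sum_congr rfl hpascal, sum_add_distrib,
      sum_range_choose_mul_choose a m c, sum_range_choose_mul_choose a m (c + 1), Nat.sub_self,
      choose_zero_succ, mul_zero, add_zero, show a + (c + 1) + 1 = a + c + 1 + 1 by ring,
      choose_succ_succ' (m + 1)]

end Nat

theorem Finset.sum_range_choose_mul_eq_of_lt {R : Type*} [NonAssocSemiring R] {k N : ℕ}
    (h : k < N) (f : ℕ → R) :
    ∑ n ∈ range (k + 1), (k.choose n : R) * f n = ∑ n ∈ range N, (k.choose n : R) * f n :=
  sum_subset (range_subset_range.2 h) fun n _ hn => by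
    rw [Nat.choose_eq_zero_of_lt (by simpa using hn), Nat.cast_zero, zero_mul]

theorem add_pow_div_factorial {K : Type*} [Field K] [CharZero K] (u v : K) (n : ℕ) :
    (u + v) ^ n / n.factorial
      = ∑ ab ∈ antidiagonal n, u ^ ab.1 / ab.1.factorial * (v ^ ab.2 / ab.2.factorial) := by
  rw [(Commute.all u v).add_pow', sum_div]
  refine sum_congr rfl fun ⟨a, b⟩ hab => ?_
  rw [HasAntidiagonal.mem_antidiagonal] at hab
  subst hab
  have hfact := (a + b).factorial_ne_zero
  rw [nsmul_eq_mul, Nat.cast_add_choose]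
  field_simp

/-- The Laguerre polynomial `L_k^{(0)}`. -/
noncomputable def laguerre (k : ℕ) (x : ℝ) : ℝ :=
  ∑ n ∈ range (k + 1), (k.choose n : ℝ) * (-x) ^ n / n.factorial

theorem laguerre_eq_sum_range {k N : ℕ} (h : k < N) (x : ℝ) :
    laguerre k x = ∑ n ∈ range N, (k.choose n : ℝ) * ((-x) ^ n / n.factorial) := by
  simp only [laguerre, mul_div_assoc, sum_range_choose_mul_eq_of_lt h]

theorem laguerre_add_eq_sum_sum (j : ℕ) (x y : ℝ) :
    laguerre j (x + y) = ∑ a ∈ range (j + 1), ∑ b ∈ range (j + 1),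
      (j.choose (a + b) : ℝ) * ((-x) ^ a / a.factorial * ((-y) ^ b / b.factorial)) := by
  set f : ℕ → ℕ → ℝ := fun a b => (j.choose (a + b) : ℝ) *
    ((-x) ^ a / a.factorial * ((-y) ^ b / b.factorial))
  calc laguerre j (x + y) = ∑ n ∈ range (j + 1), ∑ a ∈ range (n + 1), f a (n - a) := by
        simp only [laguerre, mul_div_assoc, neg_add, add_pow_div_factorial, mul_sum,
          Nat.sum_antidiagonal_eq_sum_range_succ_mk, f]
        refine sum_congr rfl fun n _ => sum_congr rfl fun a ha => ?_
        rw [Nat.add_sub_cancel' (by simpa [Nat.lt_succ_iff] using ha)]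
    _ = ∑ a ∈ range (j + 1), ∑ b ∈ range (j + 1 - a), f a b := sum_range_diag_flip _ _
    _ = ∑ a ∈ range (j + 1), ∑ b ∈ range (j + 1), f a b := by
        refine sum_congr rfl fun a ha => sum_subset (range_subset_range.2 (by omega))
          fun b _ hb => ?_
        simp only [mem_range] at ha hb
        simp only [f, Nat.choose_eq_zero_of_lt (by omega : j < a + b), Nat.cast_zero, zero_mul]

theorem assocLaguerre_zero (y : ℝ) : assocLaguerre 0 y = 1 := by
  simp [assocLaguerre]

theorem assocLaguerre_succ (m : ℕ) (y : ℝ) :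
    assocLaguerre (m + 1) y
      = ∑ b ∈ range (m + 1), (m.choose b : ℝ) * ((-y) ^ (b + 1) / (b + 1).factorial) := by
  rw [assocLaguerre, sum_range_succ']
  simp only [Nat.add_sub_cancel, Nat.sub_zero, Nat.choose_succ_self, Nat.cast_zero, mul_zero,
    zero_mul, add_zero]
  refine sum_congr rfl fun b hb => ?_
  rw [Nat.add_sub_add_right, Nat.choose_symm (by simpa [Nat.lt_succ_iff] using hb)]
  ring

theorem sum_range_assocLaguerre_succ_mul_laguerre (m : ℕ) (x y : ℝ) :
    ∑ k ∈ range (m + 1), assocLaguerre (m - k + 1) y * laguerre k x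
      = ∑ a ∈ range (m + 2), ∑ b ∈ range (m + 1), ((m + 1).choose (a + b + 1) : ℝ) *
          ((-x) ^ a / a.factorial * ((-y) ^ (b + 1) / (b + 1).factorial)) := by
  calc ∑ k ∈ range (m + 1), assocLaguerre (m - k + 1) y * laguerre k x
      = ∑ k ∈ range (m + 1), ∑ a ∈ range (m + 2), ∑ b ∈ range (m + 1),
          ((k.choose a * (m - k).choose b : ℕ) : ℝ) *
            ((-x) ^ a / a.factorial * ((-y) ^ (b + 1) / (b + 1).factorial)) := by
        refine sum_congr rfl fun k hk => ?_
        rw [mem_range] at hk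
        rw [assocLaguerre_succ, sum_range_choose_mul_eq_of_lt (by omega : m - k < m + 1),
          laguerre_eq_sum_range (by omega : k < m + 2), sum_mul_sum, sum_comm]
        refine sum_congr rfl fun a _ => sum_congr rfl fun b _ => ?_
        push_cast
        ring
    _ = ∑ a ∈ range (m + 2), ∑ b ∈ range (m + 1), ∑ k ∈ range (m + 1),
          ((k.choose a * (m - k).choose b : ℕ) : ℝ) *
            ((-x) ^ a / a.factorial * ((-y) ^ (b + 1) / (b + 1).factorial)) := by
        rw [sum_comm]
        exact sum_congr rfl fun a _ => sum_comm
    _ = _ := by simp only [← sum_mul, ← Nat.cast_sum, Nat.sum_range_choose_mul_choose]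

theorem laguerre_add (j : ℕ) (x y : ℝ) :
    laguerre j (x + y) = ∑ k ∈ range (j + 1), assocLaguerre (j - k) y * laguerre k x := by
  rcases j with _ | m
  · simp [laguerre, assocLaguerre_zero]
  -- The `k = m + 1` term is `L_{m+1}(x)`, the `b = 0` part of the expansion of `L_{m+1}(x + y)`.
  have hsub : ∀ k ∈ range (m + 1), m + 1 - k = m - k + 1 := fun k hk => by
    rw [mem_range] at hk; omega
  rw [sum_range_succ, Nat.sub_self, assocLaguerre_zero, one_mul,
    sum_congr rfl fun k hk => by rw [hsub k hk], sum_range_assocLaguerre_succ_mul_laguerre,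
    laguerre_add_eq_sum_sum, laguerre_eq_sum_range (by omega : m + 1 < m + 2), ← sum_add_distrib]
  refine sum_congr rfl fun a _ => ?_
  rw [sum_range_succ']
  simp [add_assoc]

theorem laguerreFun_eq (p : ℝ) (k : ℕ) (t : ℝ) :
    laguerreFun p k t = Real.sqrt (2 * p) * Real.exp (-p * t) * laguerre k (2 * p * t) := rfl

theorem laguerreFun_add (p τ : ℝ) (j : ℕ) (s : ℝ) :
    laguerreFun p j (s + τ)
      = ∑ k ∈ range (j + 1), markovH (2 * p * τ) (j - k) * laguerreFun p k s := by
  simp only [laguerreFun_eq, markovH, mul_add, neg_mul, laguerre_add, mul_sum]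
  refine sum_congr rfl fun k _ => ?_
  rw [show -(2 * p * τ) / 2 = -(p * τ) by ring, Real.exp_add]
  ring

theorem memLp_two_pow_mul_exp_neg_mul {p : ℝ} (hp : 0 < p) (n : ℕ) :
    MemLp (fun t : ℝ => t ^ n * Real.exp (-p * t)) 2 (volume.restrict (Set.Ioi 0)) := by
  rw [memLp_two_iff_integrable_sq (by fun_prop)]
  have hgamma := integrableOn_rpow_mul_exp_neg_mul_rpow (s := (2 * n : ℕ)) (p := 1)
    (b := 2 * p) (neg_one_lt_zero.trans_le (Nat.cast_nonneg _)) one_pos (by positivity)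
  refine hgamma.congr_fun (fun t _ => ?_) measurableSet_Ioi
  simp only [Real.rpow_natCast, Real.rpow_one, mul_pow, ← Real.exp_nat_mul, pow_mul']
  ring_nf

theorem memLp_two_laguerreFun {p : ℝ} (hp : 0 < p) (k : ℕ) :
    MemLp (laguerreFun p k) 2 (volume.restrict (Set.Ioi 0)) := by
  have hsum : laguerreFun p k = fun t => ∑ n ∈ range (k + 1),
      (Real.sqrt (2 * p) * k.choose n * (-(2 * p)) ^ n / n.factorial) *
        (t ^ n * Real.exp (-p * t)) := by
    ext t
    simp only [laguerreFun, mul_sum, neg_mul_eq_neg_mul, mul_pow]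
    refine sum_congr rfl fun n _ => ?_
    ring
  rw [hsum]
  exact memLp_finsetSum _ fun n _ => (memLp_two_pow_mul_exp_neg_mul hp n).const_mul _

theorem setIntegral_Ioi_comp_add_right {E : Type*} [NormedAddCommGroup E] [NormedSpace ℝ E]
    (f : ℝ → E) (a τ : ℝ) : ∫ s in Set.Ioi a, f (s + τ) = ∫ t in Set.Ioi (a + τ), f t := by
  have := (measurePreserving_add_right volume τ).setIntegral_preimage_emb
    (measurableEmbedding_addRight τ) f (Set.Ioi (a + τ))
  simpa [Set.preimage_add_const_Ioi] using this

theorem setIntegral_Ioi_zero_ite_le {E : Type*} [NormedAddCommGroup E] [NormedSpace ℝ E]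
    {τ : ℝ} (hτ : 0 ≤ τ) (F : ℝ → E) :
    ∫ t in Set.Ioi 0, (if τ ≤ t then F t else 0) = ∫ s in Set.Ioi 0, F (s + τ) := by
  calc ∫ t in Set.Ioi 0, (if τ ≤ t then F t else 0)
      = ∫ t in Set.Ici 0, (Set.Ici τ).indicator F t := by
        rw [integral_Ici_eq_integral_Ioi]; rfl
    _ = ∫ t in Set.Ioi τ, F t := by
        rw [setIntegral_indicator measurableSet_Ici,
          Set.inter_eq_right.2 (Set.Ici_subset_Ici.2 hτ), integral_Ici_eq_integral_Ioi]
    _ = ∫ s in Set.Ioi 0, F (s + τ) := by rw [setIntegral_Ioi_comp_add_right, zero_add]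

theorem delayed_laguerre_spectrum (p τ : ℝ) (hp : 0 < p) (hτ : 0 ≤ τ)
    (u y : ℝ → ℝ)
    (hu : MeasureTheory.MemLp u 2 (volume.restrict (Set.Ioi (0 : ℝ))))
    (hy : ∀ t, y t = if τ ≤ t then u (t - τ) else 0) (j : ℕ) :
    laguerreSpec p y j
      = ∑ k ∈ Finset.range (j + 1), markovH (2 * p * τ) (j - k) * laguerreSpec p u k := by
  have hintegrable : ∀ k,
      Integrable (fun t => u t * laguerreFun p k t) (volume.restrict (Set.Ioi 0)) :=
    fun k => hu.integrable_mul (memLp_two_laguerreFun hp k)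
  calc laguerreSpec p y j
      = ∫ t in Set.Ioi 0, if τ ≤ t then u (t - τ) * laguerreFun p j t else 0 := by
        simp only [laguerreSpec, hy, ite_mul, zero_mul]
    _ = ∫ s in Set.Ioi 0, ∑ k ∈ range (j + 1),
          markovH (2 * p * τ) (j - k) * (u s * laguerreFun p k s) := by
        rw [setIntegral_Ioi_zero_ite_le hτ]
        simp only [add_sub_cancel_right, laguerreFun_add, mul_sum, mul_left_comm]
    _ = _ := by
        rw [integral_finsetSum _ fun k _ => (hintegrable k).const_mul _]
        simp only [integral_const_mul, laguerreSpec]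
end

section
/- Let A_c be the (K+1)×(K+1) lower-triangular matrix with diagonal entries -p and strictly-lower-triangular entries -2p, and consider the LTI system ẋ = A_c x with initial condition x(0) = √(2p)·(1,...,1)ᵀ. Then the solution x(t) = e^{A_c t} x(0) satisfies x_j(t) = ℓ_j(t) for j = 0,...,K, where ℓ_j is the j-th continuous-time Laguerre function. -/
open Matrix

private lemma choose_hockey (j m : ℕ) :
    ∑ k ∈ Finset.range j, k.choose m = j.choose (m + 1) := by
  induction j with
  | zero => simp
  | succ j ih => rw [Finset.sum_range_succ, ih, Nat.choose_succ_succ, Nat.add_comm]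

/-- The Laguerre polynomial part. -/
noncomputable def lagS (p : ℝ) (k : ℕ) (t : ℝ) : ℝ :=
  ∑ n ∈ Finset.range (k + 1), (k.choose n : ℝ) * (-(2 * p * t)) ^ n / (n.factorial : ℝ)

private lemma lagS_zero (p : ℝ) (k : ℕ) : lagS p k 0 = 1 := by
  unfold lagS
  rw [Finset.sum_eq_single 0]
  · simp
  · intro n _ hn
    simp [zero_pow hn]
  · intro h
    simp at h

private lemma hasDerivAt_lagS (p : ℝ) (j : ℕ) (t : ℝ) :
    HasDerivAt (lagS p j) (-(2 * p) * ∑ k ∈ Finset.range j, lagS p k t) t := by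
  have hinner : HasDerivAt (fun t : ℝ => -(2 * p * t)) (-(2 * p)) t := by
    simpa using ((hasDerivAt_id t).const_mul (2 * p)).fun_neg
  have h : HasDerivAt (lagS p j)
      (∑ n ∈ Finset.range (j + 1),
        (j.choose n : ℝ) * ((n : ℝ) * (-(2 * p * t)) ^ (n - 1) * -(2 * p)) / (n.factorial : ℝ))
      t := by
    apply HasDerivAt.fun_sum
    intro n _
    exact ((hinner.pow n).const_mul _).div_const _
  convert h using 1
  -- compute the derivative sum
  rw [Finset.sum_range_succ' (fun n => (j.choose n : ℝ) *
      ((n : ℝ) * (-(2 * p * t)) ^ (n - 1) * -(2 * p)) / (n.factorial : ℝ)) j]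
  have h0 : (j.choose 0 : ℝ) * ((0 : ℕ) * (-(2 * p * t)) ^ (0 - 1) * -(2 * p)) /
      ((0 : ℕ).factorial : ℝ) = 0 := by simp
  rw [h0, add_zero]
  have hterm : ∀ i ∈ Finset.range j,
      (j.choose (i + 1) : ℝ) * (((i + 1 : ℕ) : ℝ) * (-(2 * p * t)) ^ (i + 1 - 1) * -(2 * p)) /
        (((i + 1).factorial : ℝ)) =
      -(2 * p) * ((j.choose (i + 1) : ℝ) * (-(2 * p * t)) ^ i / (i.factorial : ℝ)) := by
    intro i _
    have hfac : ((i + 1).factorial : ℝ) = ((i : ℝ) + 1) * (i.factorial : ℝ) := by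
      rw [Nat.factorial_succ]; push_cast; ring
    have h1 : ((i : ℝ) + 1) ≠ 0 := by positivity
    have h2 : (i.factorial : ℝ) ≠ 0 := Nat.cast_ne_zero.2 i.factorial_ne_zero
    rw [Nat.add_sub_cancel, hfac]
    push_cast
    field_simp
  rw [Finset.sum_congr rfl hterm, ← Finset.mul_sum]
  congr 1
  -- ∑ k < j, lagS p k t = ∑ i < j, C(j,i+1) x^i / i!
  have hS : ∀ k ∈ Finset.range j, lagS p k t =
      ∑ n ∈ Finset.range j, (k.choose n : ℝ) * (-(2 * p * t)) ^ n / (n.factorial : ℝ) := by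
    intro k hk
    apply Finset.sum_subset
    · exact Finset.range_subset_range.2 (Finset.mem_range.1 hk)
    · intro n _ hn
      have : k < n := by
        simp only [Finset.mem_range, not_lt] at hn
        omega
      rw [Nat.choose_eq_zero_of_lt this]
      simp
  rw [Finset.sum_congr rfl hS, Finset.sum_comm]
  apply Finset.sum_congr rfl
  intro n _
  rw [← Finset.sum_div, ← Finset.sum_mul, ← Nat.cast_sum, choose_hockey]

private lemma hasDerivAt_laguerreFun (p : ℝ) (j : ℕ) (t : ℝ) :
    HasDerivAt (fun s => laguerreFun p j s)
      (-p * laguerreFun p j t + -(2 * p) * ∑ k ∈ Finset.range j, laguerreFun p k t) t := by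
  have hE : HasDerivAt (fun s : ℝ => Real.exp (-p * s)) (Real.exp (-p * t) * -p) t := by
    have : HasDerivAt (fun s : ℝ => -p * s) (-p) t := by
      simpa using (hasDerivAt_id t).const_mul (-p)
    exact this.exp
  have h := ((hE.const_mul (Real.sqrt (2 * p))).mul (hasDerivAt_lagS p j t))
  have hfun : ((fun s => Real.sqrt (2 * p) * Real.exp (-p * s)) * lagS p j) =
      fun s => laguerreFun p j s := rfl
  rw [hfun] at h
  refine h.congr_deriv (Eq.symm ?_)
  show _ = Real.sqrt (2 * p) * (Real.exp (-p * t) * -p) * lagS p j t +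
      Real.sqrt (2 * p) * Real.exp (-p * t) * (-(2 * p) * ∑ k ∈ Finset.range j, lagS p k t)
  have hl : ∀ k, laguerreFun p k t = Real.sqrt (2 * p) * Real.exp (-p * t) * lagS p k t :=
    fun k => rfl
  simp only [hl, Finset.mul_sum]
  congr 1
  · ring
  · apply Finset.sum_congr rfl; intro k _; ring

theorem laguerre_state_space (p : ℝ) (hp : 0 < p) (K : ℕ)
    (Ac : Matrix (Fin (K + 1)) (Fin (K + 1)) ℝ)
    (hAc : ∀ i j, Ac i j = if i = j then -p else if j < i then -2 * p else 0)
    (x0 : Fin (K + 1) → ℝ) (hx0 : ∀ i, x0 i = Real.sqrt (2 * p)) :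
    ∀ t : ℝ, 0 ≤ t → ∀ j : Fin (K + 1),
      (NormedSpace.exp (t • Ac)).mulVec x0 j = laguerreFun p j t := by
  intro t ht j
  letI : SeminormedRing (Matrix (Fin (K + 1)) (Fin (K + 1)) ℝ) := Matrix.linftyOpSemiNormedRing
  letI : NormedRing (Matrix (Fin (K + 1)) (Fin (K + 1)) ℝ) := Matrix.linftyOpNormedRing
  letI : NormedAlgebra ℝ (Matrix (Fin (K + 1)) (Fin (K + 1)) ℝ) := Matrix.linftyOpNormedAlgebra
  set f : ℝ → (Fin (K + 1) → ℝ) := fun s => (NormedSpace.exp (s • Ac)).mulVec x0 with hfdef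
  set g : ℝ → (Fin (K + 1) → ℝ) := fun s i => laguerreFun p (i : ℕ) s with hgdef
  -- derivative of f
  have hf' : ∀ s : ℝ, HasDerivAt f (Ac.mulVec (f s)) s := by
    intro s
    let Lm : Matrix (Fin (K + 1)) (Fin (K + 1)) ℝ →ₗ[ℝ] (Fin (K + 1) → ℝ) :=
      { toFun := fun M => M.mulVec x0
        map_add' := fun M N => Matrix.add_mulVec M N x0
        map_smul' := fun c M => Matrix.smul_mulVec c M x0 }
    have h1 := hasDerivAt_exp_smul_const' (𝕂 := ℝ) Ac s
    have h2 := (LinearMap.toContinuousLinearMap Lm).hasFDerivAt.comp_hasDerivAt s h1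
    have h3 : HasDerivAt (fun u : ℝ => (NormedSpace.exp (u • Ac)).mulVec x0)
        ((Ac * NormedSpace.exp (s • Ac)).mulVec x0) s := by
      exact h2
    rw [hfdef]
    convert h3 using 1
    rw [← Matrix.mulVec_mulVec]
  -- derivative of g
  have hAg : ∀ s : ℝ, ∀ i : Fin (K + 1),
      Ac.mulVec (g s) i = -p * laguerreFun p (i : ℕ) s +
        -(2 * p) * ∑ k ∈ Finset.range (i : ℕ), laguerreFun p k s := by
    intro s i
    have e1 : Ac.mulVec (g s) i = ∑ l : Fin (K + 1), Ac i l * g s l := rfl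
    have e2 : ∀ l : Fin (K + 1), Ac i l * g s l =
        (fun m : ℕ => (if (i : ℕ) = m then -p else if m < (i : ℕ) then -2 * p else 0) *
          laguerreFun p m s) (l : ℕ) := by
      intro l
      rw [hAc]
      simp only [Fin.ext_iff, Fin.lt_iff_val_lt_val]
      rfl
    rw [e1, Finset.sum_congr rfl (fun l _ => e2 l),
      Fin.sum_univ_eq_sum_range
        (fun m => (if (i : ℕ) = m then -p else if m < (i : ℕ) then -2 * p else 0) *
          laguerreFun p m s) (K + 1)]
    have hsub : ∑ m ∈ Finset.range (K + 1),
        (if (i : ℕ) = m then -p else if m < (i : ℕ) then -2 * p else 0) * laguerreFun p m s =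
        ∑ m ∈ Finset.range ((i : ℕ) + 1),
        (if (i : ℕ) = m then -p else if m < (i : ℕ) then -2 * p else 0) * laguerreFun p m s := by
      symm
      apply Finset.sum_subset
      · exact Finset.range_subset_range.2 i.isLt
      · intro m _ hm
        simp only [Finset.mem_range, not_lt] at hm
        rw [if_neg (by omega), if_neg (by omega), zero_mul]
    rw [hsub, Finset.sum_range_succ, if_pos rfl, Finset.mul_sum]
    rw [Finset.sum_congr rfl (fun m hm => by
      rw [if_neg (by simp only [Finset.mem_range] at hm; omega),
        if_pos (Finset.mem_range.1 hm)])]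
    rw [add_comm]
    congr 1
    apply Finset.sum_congr rfl
    intro m _
    ring
  have hg' : ∀ s : ℝ, HasDerivAt g (Ac.mulVec (g s)) s := by
    intro s
    rw [hasDerivAt_pi]
    intro i
    rw [hAg s i]
    exact hasDerivAt_laguerreFun p (i : ℕ) s
  -- initial condition
  have h0 : f 0 = g 0 := by
    funext i
    have : (0 : ℝ) • Ac = 0 := zero_smul _ _
    rw [hfdef, hgdef]
    simp only [this, NormedSpace.exp_zero, Matrix.one_mulVec, hx0]
    have : laguerreFun p (i : ℕ) 0 = Real.sqrt (2 * p) * Real.exp (-p * 0) * lagS p (i : ℕ) 0 :=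
      rfl
    rw [this, lagS_zero]
    simp
  -- Lipschitz
  let L2 : (Fin (K + 1) → ℝ) →L[ℝ] (Fin (K + 1) → ℝ) :=
    LinearMap.toContinuousLinearMap (Matrix.mulVecLin Ac)
  have hlip : ∀ s : ℝ, LipschitzWith ‖L2‖₊ (fun x : Fin (K + 1) → ℝ => Ac.mulVec x) := by
    intro s
    have := L2.lipschitz
    exact this
  have huniq := ODE_solution_unique (v := fun _ x => Ac.mulVec x) (f := f) (g := g)
    (a := 0) (b := t) (fun s => hlip s)
    (fun s _ => (hf' s).continuousAt.continuousWithinAt)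
    (fun s _ => (hf' s).hasDerivWithinAt)
    (fun s _ => (hg' s).continuousAt.continuousWithinAt)
    (fun s _ => (hg' s).hasDerivWithinAt)
    h0
  have := huniq (Set.right_mem_Icc.2 ht)
  exact congrFun this j
end
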